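/- Let I ⊆ ℝ be a bounded open interval, m a positive integer, and α ∈ (0,1]. There exists a constant C depending only on m and α such that for every f ∈ C^{m,α}(Ī, ℂ), every t ∈ I, and every s = 1,…,m: |f^{(s)}(t)| ≤ C |I|^{-s} ( V_I(f) + V_I(f)^{(m+α−s)/(m+α)} · (Höld_{α,I}(f^{(m)}))^{s/(m+α)} · |I|^s ), where V_I(f) := sup_{t,s∈I} |f(t) − f(s)| and |I| is the length of I. -/

import Mathlib

open Set MeasureTheory Real

noncomputable section

/-- `f` is absolutely continuous on the set `S` : for every `ε > 0` there is `δ > 0` such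
that for any finitely many non-overlapping intervals `[u i, v i] ⊆ S` of total length `< δ`
the sum `∑ ‖f (v i) - f (u i)‖` is `< ε`. -/
def AbsContOn {E : Type*} [NormedAddCommGroup E] (f : ℝ → E) (S : Set ℝ) : Prop :=
  ∀ ε : ℝ, 0 < ε → ∃ δ : ℝ, 0 < δ ∧
    ∀ (N : ℕ) (u v : Fin N → ℝ),
      (∀ i, u i ≤ v i ∧ Set.Icc (u i) (v i) ⊆ S) →
      (∀ i j, i ≠ j → Disjoint (Set.Ioo (u i) (v i)) (Set.Ioo (u j) (v j))) →
      (∑ i, (v i - u i)) < δ →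
      (∑ i, ‖f (v i) - f (u i)‖) < ε

/-- `d (i+1)` is the derivative of `d i` on `S` for all `i < k`; thus `d i` is the `i`-th
derivative of `d 0` on `S` for `i ≤ k`. -/
def DerivChain {E : Type*} [NormedAddCommGroup E] [NormedSpace ℝ E]
    (d : ℕ → ℝ → E) (k : ℕ) (S : Set ℝ) : Prop :=
  ∀ i < k, ∀ x ∈ S, HasDerivWithinAt (d i) (d (i + 1) x) S x

/-- Hölder constant of exponent `a` of `g` on `S`. -/
def HolderConst {E : Type*} [NormedAddCommGroup E] (a : ℝ) (S : Set ℝ) (g : ℝ → E) : ℝ :=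
  sSup {r : ℝ | ∃ x ∈ S, ∃ y ∈ S, x ≠ y ∧ r = ‖g x - g y‖ / |x - y| ^ a}

/-- Membership in `C^{k,1}(S)`, encoded via the chain of derivatives `d`:
`d 0` is `k` times differentiable with `i`-th derivative `d i`, and the top
derivative `d k` is Lipschitz. -/
def MemCk1 {E : Type*} [NormedAddCommGroup E] [NormedSpace ℝ E]
    (d : ℕ → ℝ → E) (k : ℕ) (S : Set ℝ) : Prop :=
  DerivChain d k S ∧ ∃ L : ℝ, ∀ x ∈ S, ∀ y ∈ S, ‖d k x - d k y‖ ≤ L * |x - y|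

/-- The `C^{k,1}`-norm: sup of all derivatives up to order `k` plus the Lipschitz
(Hölder-1) constant of the `k`-th derivative. -/
def CNorm {E : Type*} [NormedAddCommGroup E] (d : ℕ → ℝ → E) (k : ℕ) (S : Set ℝ) : ℝ :=
  sSup {r : ℝ | ∃ i ≤ k, ∃ x ∈ S, r = ‖d i x‖} + HolderConst 1 S (d k)

/-- The oscillation `V_I(g) = sup_{x,y ∈ S} ‖g x - g y‖`. -/
def OscOn {E : Type*} [NormedAddCommGroup E] (S : Set ℝ) (g : ℝ → E) : ℝ :=
  sSup {r : ℝ | ∃ x ∈ S, ∃ y ∈ S, r = ‖g x - g y‖}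


/-!
Take a step `ρ` with `[t, t + ρ] ⊆ I` and the nodes `t + jρ/m`, `0 ≤ j ≤ m`. By Taylor's
formula, `f` differs at the nodes from its Taylor polynomial of degree `m` at `t` by at most
`Höld · |ρ|^(m+α)`, while its values there differ from `f t` by at most `V`. Inverting the
Vandermonde matrix of the nodes gives a fixed linear combination of the values at the nodes that
extracts `ρ^s f^(s)(t)` from any polynomial of degree `≤ m`; hence
`|f^(s)(t)| |ρ|^s ≤ K (V + Höld |ρ|^(m+α))`. A step of length `|I|/4` fits on one side of every
`t`, and choosing `|ρ| = min (|I|/4) (V/Höld)^(1/(m+α))` gives the claim.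
-/

section Taylor

variable {E : Type*} [NormedAddCommGroup E] [NormedSpace ℝ E]

def taylorSum (v : ℕ → E) (n : ℕ) (x : ℝ) : E :=
  ∑ i ∈ Finset.range (n + 1), (x ^ i / i.factorial) • v i

@[simp]
theorem taylorSum_zero_left (v : ℕ → E) (x : ℝ) : taylorSum v 0 x = v 0 := by
  simp [taylorSum]

@[simp]
theorem taylorSum_zero_right (v : ℕ → E) (n : ℕ) : taylorSum v n 0 = v 0 := by
  rw [taylorSum, Finset.sum_eq_single 0] <;> simp +contextual

theorem hasDerivAt_taylorSum (v : ℕ → E) (n : ℕ) (x : ℝ) :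
    HasDerivAt (taylorSum v (n + 1)) (taylorSum (fun i => v (i + 1)) n x) x := by
  have hterm : ∀ i ∈ Finset.range (n + 1), HasDerivAt
      (fun y : ℝ => (y ^ (i + 1) / (i + 1).factorial) • v (i + 1))
      ((x ^ i / i.factorial) • v (i + 1)) x := by
    intro i _
    convert ((hasDerivAt_pow (i + 1) x).div_const ((i + 1).factorial : ℝ)).smul_const
      (v (i + 1)) using 2
    rw [Nat.factorial_succ]
    push_cast
    field_simp
  convert (HasDerivAt.fun_sum hterm).const_add (v 0) using 1
  · funext y
    rw [taylorSum, Finset.sum_range_succ', add_comm]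
    simp
  · rfl

theorem DerivChain.mono {d : ℕ → ℝ → E} {k : ℕ} {S T : Set ℝ} (hd : DerivChain d k S)
    (hTS : T ⊆ S) : DerivChain d k T :=
  fun i hi x hx => (hd i hi x (hTS hx)).mono hTS

theorem DerivChain.shift {d : ℕ → ℝ → E} {k : ℕ} {S : Set ℝ} (hd : DerivChain d (k + 1) S) :
    DerivChain (fun i => d (i + 1)) k S :=
  fun i hi x hx => hd (i + 1) (by omega) x hx

theorem DerivChain.continuousOn {d : ℕ → ℝ → E} {k i : ℕ} {S : Set ℝ} (hd : DerivChain d k S)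
    (hi : i < k) : ContinuousOn (d i) S :=
  fun x hx => (hd i hi x hx).continuousWithinAt

theorem norm_sub_taylorSum_le {d : ℕ → ℝ → E} {n : ℕ} {t p M : ℝ}
    (hd : DerivChain d n (uIcc t p)) (hM : ∀ y ∈ uIcc t p, ‖d n y - d n t‖ ≤ M) :
    ‖d 0 p - taylorSum (fun i => d i t) n (p - t)‖ ≤ M * |p - t| ^ n := by
  induction n generalizing d p with
  | zero => simpa using hM p right_mem_uIcc
  | succ n ih =>
    -- the remainder of order `n + 1` has the remainder of order `n` of the shifted chain as
    -- derivative, which is bounded by induction on each `[t, y] ⊆ [t, p]`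
    have hM0 : 0 ≤ M := by simpa using hM t left_mem_uIcc
    have hderiv : ∀ y ∈ uIcc t p, HasDerivWithinAt
        (fun y => d 0 y - taylorSum (fun i => d i t) (n + 1) (y - t))
        (d 1 y - taylorSum (fun i => d (i + 1) t) n (y - t)) (uIcc t p) y := fun y hy =>
      (hd 0 n.succ_pos y hy).sub
        ((hasDerivAt_taylorSum _ n (y - t)).comp_sub_const y t).hasDerivWithinAt
    have hbound : ∀ y ∈ uIcc t p,
        ‖d 1 y - taylorSum (fun i => d (i + 1) t) n (y - t)‖ ≤ M * |p - t| ^ n := by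
      intro y hy
      have hsub : uIcc t y ⊆ uIcc t p := uIcc_subset_uIcc left_mem_uIcc hy
      calc _ ≤ M * |y - t| ^ n := ih (hd.shift.mono hsub) fun z hz => hM z (hsub hz)
        _ ≤ M * |p - t| ^ n :=
          mul_le_mul_of_nonneg_left
            (pow_le_pow_left₀ (abs_nonneg _) (abs_sub_left_of_mem_uIcc hy) n) hM0
    have := (convex_uIcc t p).norm_image_sub_le_of_norm_hasDerivWithin_le hderiv hbound
      left_mem_uIcc right_mem_uIcc
    simpa [pow_succ, mul_assoc] using this

end Taylor

theorem exists_sum_mul_pow_eq {K : Type*} [Field K] {n : ℕ} {x : Fin n → K}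
    (hx : Function.Injective x) (y : Fin n → K) :
    ∃ c : Fin n → K, ∀ i : Fin n, ∑ j, c j * x j ^ (i : ℕ) = y i := by
  have hA : IsUnit (Matrix.vandermonde x).transpose := by
    rw [Matrix.isUnit_iff_isUnit_det, Matrix.det_transpose, isUnit_iff_ne_zero]
    exact Matrix.det_vandermonde_ne_zero_iff.2 hx
  obtain ⟨c, hc⟩ := Matrix.mulVec_surjective_iff_isUnit.2 hA y
  exact ⟨c, fun i => by simpa [Matrix.mulVec, dotProduct, mul_comm] using congrFun hc i⟩

section FiniteDifference

variable {E : Type*} [NormedAddCommGroup E] [NormedSpace ℝ E]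

theorem sum_smul_taylorSum_eq {m s : ℕ} (hsm : s ≤ m) {c : Fin (m + 1) → ℝ}
    (hc : ∀ i : Fin (m + 1),
      ∑ j, c j * ((j : ℕ) : ℝ) ^ (i : ℕ) = if (i : ℕ) = s then (s.factorial : ℝ) else 0)
    (v : ℕ → E) (h : ℝ) :
    ∑ j, c j • taylorSum v m ((j : ℕ) * h) = h ^ s • v s := by
  have hcoeff : ∀ i ∈ Finset.range (m + 1),
      ∑ j : Fin (m + 1), (c j * ((((j : ℕ) : ℝ) * h) ^ i / i.factorial)) • v i
        = (if i = s then h ^ s else 0) • v i := by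
    intro i hi
    rw [← Finset.sum_smul]
    congr 1
    have hci := hc ⟨i, Finset.mem_range.1 hi⟩
    calc ∑ j : Fin (m + 1), c j * ((((j : ℕ) : ℝ) * h) ^ i / i.factorial)
        = (∑ j : Fin (m + 1), c j * ((j : ℕ) : ℝ) ^ i) * (h ^ i / i.factorial) := by
          rw [Finset.sum_mul]
          exact Finset.sum_congr rfl fun j _ => by ring
      _ = _ := by
          rw [hci]
          split_ifs with his
          · subst his
            field_simp
          · simp
  simp_rw [taylorSum, Finset.smul_sum, smul_smul]
  rw [Finset.sum_comm, Finset.sum_congr rfl hcoeff]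
  simp [Nat.lt_succ_of_le hsm]

theorem norm_smul_le_of_moments {m s : ℕ} (hs : 1 ≤ s) (hsm : s ≤ m) {c : Fin (m + 1) → ℝ}
    (hc : ∀ i : Fin (m + 1),
      ∑ j, c j * ((j : ℕ) : ℝ) ^ (i : ℕ) = if (i : ℕ) = s then (s.factorial : ℝ) else 0)
    (v : ℕ → E) (y : Fin (m + 1) → E) {h V R : ℝ} (hV : ∀ j, ‖y j - y 0‖ ≤ V)
    (hR : ∀ j, ‖y j - taylorSum v m ((j : ℕ) * h)‖ ≤ R) :
    |h| ^ s * ‖v s‖ ≤ (∑ j, |c j|) * (V + R) := by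
  have hc₀ : ∑ j, c j = 0 := by simpa [(Nat.one_le_iff_ne_zero.mp hs).symm] using hc 0
  have hid : h ^ s • v s
      = ∑ j, c j • (y j - y 0) - ∑ j, c j • (y j - taylorSum v m ((j : ℕ) * h)) := by
    simp only [smul_sub, Finset.sum_sub_distrib, ← Finset.sum_smul, hc₀, zero_smul,
      sum_smul_taylorSum_eq hsm hc]
    abel
  have hsum : ∀ {w : Fin (m + 1) → E} {B : ℝ}, (∀ j, ‖w j‖ ≤ B) →
      ‖∑ j, c j • w j‖ ≤ (∑ j, |c j|) * B := fun hw => by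
    rw [Finset.sum_mul]
    refine (norm_sum_le _ _).trans (Finset.sum_le_sum fun j _ => ?_)
    rw [norm_smul, Real.norm_eq_abs]
    exact mul_le_mul_of_nonneg_left (hw j) (abs_nonneg _)
  calc |h| ^ s * ‖v s‖ = ‖h ^ s • v s‖ := by rw [norm_smul, norm_pow, Real.norm_eq_abs]
    _ ≤ (∑ j, |c j|) * V + (∑ j, |c j|) * R := by
        rw [hid]
        exact (norm_sub_le _ _).trans (add_le_add (hsum hV) (hsum hR))
    _ = (∑ j, |c j|) * (V + R) := (mul_add _ _ _).symm

theorem exists_finiteDifference_bound (m : ℕ) :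
    ∃ K : ℝ, 0 < K ∧ ∀ s, 1 ≤ s → s ≤ m → ∀ (v : ℕ → E) (y : Fin (m + 1) → E) (h V R : ℝ),
      (∀ j, ‖y j - y 0‖ ≤ V) → (∀ j, ‖y j - taylorSum v m ((j : ℕ) * h)‖ ≤ R) →
      |h| ^ s * ‖v s‖ ≤ K * (V + R) := by
  have hnodes : Function.Injective fun j : Fin (m + 1) => ((j : ℕ) : ℝ) :=
    fun i j hij => Fin.ext (Nat.cast_injective hij)
  choose c hc using fun s : ℕ =>
    exists_sum_mul_pow_eq hnodes fun i => if (i : ℕ) = s then (s.factorial : ℝ) else 0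
  refine ⟨1 + ∑ s ∈ Finset.range (m + 1), ∑ j, |c s j|, by positivity, ?_⟩
  intro s hs hsm v y h V R hV hR
  have hVR : 0 ≤ V + R := add_nonneg ((norm_nonneg _).trans (hV 0)) ((norm_nonneg _).trans (hR 0))
  have hcs : ∑ j, |c s j| ≤ ∑ s ∈ Finset.range (m + 1), ∑ j, |c s j| :=
    Finset.single_le_sum (f := fun s => ∑ j, |c s j|) (fun _ _ => by positivity)
      (Finset.mem_range.2 (by omega))
  calc |h| ^ s * ‖v s‖ ≤ (∑ j, |c s j|) * (V + R) := norm_smul_le_of_moments hs hsm (hc s) v y hV hR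
    _ ≤ _ := by gcongr; linarith

end FiniteDifference

section LocalBound

variable {E : Type*} [NormedAddCommGroup E] [NormedSpace ℝ E]

theorem norm_sub_taylorSum_le_of_holder {d : ℕ → ℝ → E} {n : ℕ} {t p H α : ℝ} (hα : 0 ≤ α)
    (hH : 0 ≤ H) (hd : DerivChain d n (uIcc t p))
    (hHol : ∀ y ∈ uIcc t p, ‖d n y - d n t‖ ≤ H * |y - t| ^ α) :
    ‖d 0 p - taylorSum (fun i => d i t) n (p - t)‖ ≤ H * |p - t| ^ α * |p - t| ^ n :=
  norm_sub_taylorSum_le hd fun y hy => (hHol y hy).trans <| mul_le_mul_of_nonneg_left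
    (Real.rpow_le_rpow (abs_nonneg _) (abs_sub_left_of_mem_uIcc hy) hα) hH

theorem exists_norm_deriv_mul_pow_le {m : ℕ} (hm : 1 ≤ m) {α : ℝ} (hα : 0 ≤ α) :
    ∃ K : ℝ, 0 < K ∧ ∀ s, 1 ≤ s → s ≤ m → ∀ (d : ℕ → ℝ → E) (S : Set ℝ) (H V t ρ : ℝ),
      uIcc t (t + ρ) ⊆ S → DerivChain d m S → 0 ≤ H →
      (∀ x ∈ S, ∀ y ∈ S, ‖d m x - d m y‖ ≤ H * |x - y| ^ α) →
      (∀ x ∈ S, ∀ y ∈ S, ‖d 0 x - d 0 y‖ ≤ V) →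
      ‖d s t‖ * |ρ| ^ s ≤ K * (V + H * |ρ| ^ ((m : ℝ) + α)) := by
  obtain ⟨K, hK, hfd⟩ := exists_finiteDifference_bound (E := E) m
  have hm₀ : (0 : ℝ) < m := by exact_mod_cast hm
  refine ⟨K * m ^ m, by positivity, ?_⟩
  intro s hs hsm d S H V t ρ hS hd hH hHol hV
  set h := ρ / m
  have hnode : ∀ j : Fin (m + 1), t + (j : ℕ) * h ∈ uIcc t (t + ρ) := by
    intro j
    have hj : ((j : ℕ) : ℝ) ≤ m := by exact_mod_cast Nat.lt_succ_iff.1 j.2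
    convert (convex_uIcc t (t + ρ)).add_smul_mem left_mem_uIcc right_mem_uIcc
      (t := ((j : ℕ) : ℝ) / m) ⟨by positivity, (div_le_one hm₀).2 hj⟩ using 1
    simp only [h, smul_eq_mul]
    ring
  have hnodeS : ∀ j : Fin (m + 1), uIcc t (t + (j : ℕ) * h) ⊆ S := fun j =>
    (uIcc_subset_uIcc left_mem_uIcc (hnode j)).trans hS
  have hrem : ∀ j : Fin (m + 1),
      ‖d 0 (t + (j : ℕ) * h) - taylorSum (fun i => d i t) m ((j : ℕ) * h)‖
        ≤ H * |ρ| ^ ((m : ℝ) + α) := by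
    intro j
    have hjρ : |(t + (j : ℕ) * h) - t| ≤ |ρ| := by
      simpa using abs_sub_left_of_mem_uIcc (hnode j)
    have htS : t ∈ S := hS left_mem_uIcc
    calc _ ≤ H * |(t + (j : ℕ) * h) - t| ^ α * |(t + (j : ℕ) * h) - t| ^ m := by
          simpa using norm_sub_taylorSum_le_of_holder hα hH (hd.mono (hnodeS j))
            fun y hy => hHol y (hnodeS j hy) t htS
      _ ≤ H * |ρ| ^ α * |ρ| ^ m := by gcongr
      _ = H * |ρ| ^ ((m : ℝ) + α) := by
          rw [add_comm, Real.rpow_add_natCast' (abs_nonneg _) (by positivity), mul_assoc]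
  have hosc : ∀ j : Fin (m + 1), ‖d 0 (t + (j : ℕ) * h) - d 0 (t + ((0 : Fin (m + 1)) : ℕ) * h)‖
      ≤ V := fun j => hV _ (hS (hnode j)) _ (hS (hnode 0))
  have hfin := hfd s hs hsm (fun i => d i t) (fun j => d 0 (t + (j : ℕ) * h)) h V _ hosc hrem
  have hms : (m : ℝ) ^ s ≤ (m : ℝ) ^ m := pow_le_pow_right₀ (by exact_mod_cast hm) hsm
  have hVH : 0 ≤ V + H * |ρ| ^ ((m : ℝ) + α) :=
    add_nonneg ((norm_nonneg _).trans (hosc 0)) (by positivity)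
  calc ‖d s t‖ * |ρ| ^ s = (m : ℝ) ^ s * (|h| ^ s * ‖d s t‖) := by
        simp only [h, abs_div, Nat.abs_cast, div_pow]
        field_simp
    _ ≤ (m : ℝ) ^ m * (K * (V + H * |ρ| ^ ((m : ℝ) + α))) := by gcongr
    _ = K * m ^ m * (V + H * |ρ| ^ ((m : ℝ) + α)) := by ring

end LocalBound

section SupremumConstants

variable {E : Type*} [NormedAddCommGroup E] {S : Set ℝ} {g : ℝ → E}

theorem oscOn_nonneg : 0 ≤ OscOn S g :=
  Real.sSup_nonneg <| by rintro _ ⟨x, -, y, -, rfl⟩; exact norm_nonneg _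

theorem norm_sub_le_oscOn {M : ℝ} (hM : ∀ x ∈ S, ‖g x‖ ≤ M) {x y : ℝ} (hx : x ∈ S)
    (hy : y ∈ S) : ‖g x - g y‖ ≤ OscOn S g := by
  refine le_csSup ⟨2 * M, ?_⟩ ⟨x, hx, y, hy, rfl⟩
  rintro _ ⟨x, hx, y, hy, rfl⟩
  linarith [norm_sub_le (g x) (g y), hM x hx, hM y hy]

theorem holderConst_nonneg {a : ℝ} : 0 ≤ HolderConst a S g :=
  Real.sSup_nonneg <| by rintro _ ⟨x, -, y, -, -, rfl⟩; positivity

theorem norm_sub_le_holderConst_mul {a H : ℝ} (ha : 0 < a)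
    (hH : ∀ x ∈ S, ∀ y ∈ S, ‖g x - g y‖ ≤ H * |x - y| ^ a) {x y : ℝ} (hx : x ∈ S)
    (hy : y ∈ S) : ‖g x - g y‖ ≤ HolderConst a S g * |x - y| ^ a := by
  rcases eq_or_ne x y with rfl | hxy
  · simp [Real.zero_rpow ha.ne']
  rw [← div_le_iff₀ (Real.rpow_pos_of_pos (abs_pos.2 (sub_ne_zero.2 hxy)) _)]
  refine le_csSup ⟨H, ?_⟩ ⟨x, hx, y, hy, hxy, rfl⟩
  rintro _ ⟨x, hx, y, hy, hxy, rfl⟩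
  rw [div_le_iff₀ (Real.rpow_pos_of_pos (abs_pos.2 (sub_ne_zero.2 hxy)) _)]
  exact hH x hx y hy

end SupremumConstants

open Filter Topology in
theorem nonpos_of_forall_mul_pow_le {X C r₁ β : ℝ} {s : ℕ} (hr₁ : 0 < r₁) (hsβ : (s : ℝ) < β)
    (h : ∀ r, 0 < r → r ≤ r₁ → X * r ^ s ≤ C * r ^ β) : X ≤ 0 := by
  have hlim : Tendsto (fun r : ℝ => C * r ^ (β - s)) (𝓝[>] 0) (𝓝 0) := by
    have hcont := (Real.continuousAt_rpow_const 0 (β - s) (Or.inr (by linarith))).const_mul C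
    simpa [Real.zero_rpow (by linarith : β - s ≠ 0)] using
      hcont.tendsto.mono_left nhdsWithin_le_nhds
  refine ge_of_tendsto hlim ?_
  filter_upwards [Ioo_mem_nhdsGT hr₁] with r hr
  rw [Real.rpow_sub_natCast hr.1.ne', mul_div_assoc', le_div_iff₀ (pow_pos hr.1 s)]
  exact h r hr.1 hr.2.le

theorem le_of_forall_mul_pow_le {X K A B r₁ β : ℝ} {s : ℕ} (hK : 0 ≤ K) (hA : 0 ≤ A)
    (hB : 0 ≤ B) (hr₁ : 0 < r₁) (hsβ : (s : ℝ) < β)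
    (h : ∀ r, 0 < r → r ≤ r₁ → X * r ^ s ≤ K * (A + B * r ^ β)) :
    X ≤ 2 * K * (A / r₁ ^ s + A ^ ((β - s) / β) * B ^ ((s : ℝ) / β)) := by
  have hβ : 0 < β := (Nat.cast_nonneg s).trans_lt hsβ
  have hat : ∀ r, 0 < r → r ≤ r₁ → B * r ^ β ≤ A → X ≤ 2 * K * (A / r ^ s) := by
    intro r hr hrr₁ hBA
    rw [mul_div_assoc', le_div_iff₀ (pow_pos hr s)]
    nlinarith [h r hr hrr₁]
  by_cases h₁ : B * r₁ ^ β ≤ A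
  · refine (hat r₁ hr₁ le_rfl h₁).trans ?_
    gcongr
    exact le_add_of_nonneg_right (by positivity)
  rw [not_le] at h₁
  rcases hA.eq_or_lt with rfl | hA₀
  · refine (nonpos_of_forall_mul_pow_le hr₁ hsβ (C := K * B) fun r hr hrr₁ => ?_).trans
      (by positivity)
    simpa [mul_assoc] using h r hr hrr₁
  have hB₀ : 0 < B := pos_of_mul_pos_left (hA₀.trans h₁) (by positivity)
  -- the scale at which the two error terms balance
  set r₀ := (A / B) ^ β⁻¹
  have hr₀ : 0 < r₀ := by positivity
  have hr₀β : r₀ ^ β = A / B := Real.rpow_inv_rpow (by positivity) hβ.ne'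
  have hr₀r₁ : r₀ ≤ r₁ := by
    rw [Real.rpow_inv_le_iff_of_pos (by positivity) hr₁.le hβ, div_le_iff₀ hB₀]
    linarith
  have hbal : A / r₀ ^ s = A ^ ((β - s) / β) * B ^ ((s : ℝ) / β) := by
    rw [← Real.rpow_natCast, ← Real.rpow_mul (by positivity), Real.div_rpow hA hB,
      show (β - s) / β = 1 - β⁻¹ * s by field_simp, Real.rpow_sub hA₀, Real.rpow_one,
      show (s : ℝ) / β = β⁻¹ * s by ring]
    field_simp
  calc X ≤ 2 * K * (A / r₀ ^ s) := hat r₀ hr₀ hr₀r₁ (by rw [hr₀β]; field_simp; rfl)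
    _ ≤ _ := by
        rw [hbal]
        gcongr
        exact le_add_of_nonneg_left (by positivity)

theorem exists_abs_eq_uIcc_subset_Ioo {a b t r : ℝ} (ht : t ∈ Ioo a b) (hr : 0 < r)
    (hrab : 2 * r < b - a) : ∃ ρ, |ρ| = r ∧ uIcc t (t + ρ) ⊆ Ioo a b := by
  by_cases hright : t + r < b
  · exact ⟨r, abs_of_pos hr, ordConnected_Ioo.uIcc_subset ht ⟨by linarith [ht.1], hright⟩⟩
  · exact ⟨-r, by simp [abs_of_pos hr],
      ordConnected_Ioo.uIcc_subset ht ⟨by linarith, by linarith [ht.2]⟩⟩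

theorem taylor_derivative_bounds_general (m : ℕ) (hm : 1 ≤ m) (αe : ℝ) (hα1 : 0 < αe) :
    ∃ C : ℝ, 0 < C ∧
      ∀ (a b : ℝ), a < b →
      ∀ d : ℕ → ℝ → ℂ,
      DerivChain d m (Icc a b) →
      (∃ H : ℝ, ∀ x ∈ Ioo a b, ∀ y ∈ Ioo a b, ‖d m x - d m y‖ ≤ H * |x - y| ^ αe) →
      ∀ t ∈ Ioo a b, ∀ s : ℕ, 1 ≤ s → s ≤ m →
        ‖d s t‖ ≤ C * ((b - a) ^ s)⁻¹ *
          (OscOn (Ioo a b) (d 0) +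
            OscOn (Ioo a b) (d 0) ^ (((m : ℝ) + αe - (s : ℝ)) / ((m : ℝ) + αe)) *
            (HolderConst αe (Ioo a b) (d m)) ^ ((s : ℝ) / ((m : ℝ) + αe)) *
            (b - a) ^ s) := by
  obtain ⟨K, hK, hlocal⟩ := exists_norm_deriv_mul_pow_le (E := ℂ) hm hα1.le
  refine ⟨2 * K * 4 ^ m, by positivity, ?_⟩
  intro a b hab d hd ⟨H, hH⟩ t ht s hs hsm
  set V := OscOn (Ioo a b) (d 0)
  set W := HolderConst αe (Ioo a b) (d m)
  obtain ⟨M, hM⟩ := isCompact_Icc.exists_bound_of_continuousOn (hd.continuousOn hm)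
  have hscale : ∀ r, 0 < r → r ≤ (b - a) / 4 →
      ‖d s t‖ * r ^ s ≤ K * (V + W * r ^ ((m : ℝ) + αe)) := by
    intro r hr hrL
    obtain ⟨ρ, rfl, hρ⟩ := exists_abs_eq_uIcc_subset_Ioo ht hr (by linarith)
    exact hlocal s hs hsm d _ W V t ρ hρ (hd.mono Ioo_subset_Icc_self) holderConst_nonneg
      (fun x hx y hy => norm_sub_le_holderConst_mul hα1 hH hx hy)
      (fun x hx y hy => norm_sub_le_oscOn (fun z hz => hM z (Ioo_subset_Icc_self hz)) hx hy)
  have hbound := le_of_forall_mul_pow_le hK.le oscOn_nonneg holderConst_nonneg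
    (by linarith : 0 < (b - a) / 4) (by linarith [(Nat.cast_le (α := ℝ)).2 hsm]) hscale
  set P := V ^ (((m : ℝ) + αe - s) / ((m : ℝ) + αe)) * W ^ ((s : ℝ) / ((m : ℝ) + αe))
  have hV₀ : 0 ≤ V := oscOn_nonneg
  have hW₀ : 0 ≤ W := holderConst_nonneg
  have hL : 0 < b - a := by linarith
  calc ‖d s t‖ ≤ 2 * K * (V / ((b - a) / 4) ^ s + P) := hbound
    _ ≤ 2 * K * (4 ^ m * (V / (b - a) ^ s) + 4 ^ m * P) := by
        gcongr 2 * K * (?_ + ?_)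
        · rw [div_pow, div_div_eq_mul_div, mul_comm, mul_div_assoc]
          exact mul_le_mul_of_nonneg_right (pow_le_pow_right₀ (by norm_num) hsm) (by positivity)
        · exact le_mul_of_one_le_left (by positivity) (one_le_pow₀ (by norm_num : (1 : ℝ) ≤ 4))
    _ = _ := by field_simp

/-- For `f ∈ C^{m,α}(Ī,ℂ)` on a bounded open interval `I` and `1 ≤ s ≤ m`,
`|f^{(s)}(t)| ≤ C |I|^{-s} (V_I(f) + V_I(f)^{(m+α-s)/(m+α)} Höld_{α,I}(f^{(m)})^{s/(m+α)} |I|^s)`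
for all `t ∈ I`, with `C = C(m,α)`. -/
theorem taylor_derivative_bounds (m : ℕ) (hm : 1 ≤ m) (αe : ℝ) (hα1 : 0 < αe) (hα2 : αe ≤ 1) :
    ∃ C : ℝ, 0 < C ∧
      ∀ (a b : ℝ), a < b →
      ∀ d : ℕ → ℝ → ℂ,
      DerivChain d m (Icc a b) →
      (∃ H : ℝ, ∀ x ∈ Ioo a b, ∀ y ∈ Ioo a b, ‖d m x - d m y‖ ≤ H * |x - y| ^ αe) →
      ∀ t ∈ Ioo a b, ∀ s : ℕ, 1 ≤ s → s ≤ m →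
        ‖d s t‖ ≤ C * ((b - a) ^ s)⁻¹ *
          (OscOn (Ioo a b) (d 0) +
            OscOn (Ioo a b) (d 0) ^ (((m : ℝ) + αe - (s : ℝ)) / ((m : ℝ) + αe)) *
            (HolderConst αe (Ioo a b) (d m)) ^ ((s : ℝ) / ((m : ℝ) + αe)) *
            (b - a) ^ s) :=
  taylor_derivative_bounds_general m hm αe hα1
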